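/- Let Q be a Dynkin quiver and e, d dimension vectors with d−e ≥ 0. The quiver Grassmannian Gr_e(M̃_d) of the rigid representation of dimension vector d is nonempty if and only if Ext¹_Q(M̃_e, M̃_{d−e}) = 0. -/

import Mathlib

/-!
STATEMENT 9: Let Q be a Dynkin quiver and e, d dimension vectors with d−e ≥ 0.
The quiver Grassmannian `Gr_e(M̃_d)` of the rigid representation of dimension
vector d is nonempty if and only if `Ext¹_Q(M̃_e, M̃_{d−e}) = 0`.

A quiver is Dynkin iff its Tits form is positive definite; rigidity and the
vanishing of `Ext¹` are expressed via surjectivity of the map `Φ` computing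
`Ext¹` (via the standard resolution over the path algebra).
-/

noncomputable section
open Matrix

variable {V A : Type}

/-- A complex representation of the quiver `(V, A, s, t)` of dimension vector `d`. -/
abbrev QRep (s t : A → V) (d : V → ℕ) : Type :=
  ∀ a : A, Matrix (Fin (d (t a))) (Fin (d (s a))) ℂ

/-- The quiver Grassmannian `Gr_e(M)`: families of subspaces `N i ⊆ ℂ^{d i}` of
dimension `e i` with `M_a (N (s a)) ⊆ N (t a)` for every arrow. -/
def SubRep (s t : A → V) {d : V → ℕ} (M : QRep s t d) (e : V → ℕ) : Type :=
  {N : ∀ i : V, Submodule ℂ (Fin (d i) → ℂ) //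
    (∀ i, Module.finrank ℂ (N i) = e i) ∧
    ∀ a : A, (N (s a)).map (M a).mulVecLin ≤ N (t a)}

/-- The map `Φ^M_N`, whose cokernel is `Ext¹_Q(N,M)`. -/
def PhiFun (s t : A → V) {e d : V → ℕ} (N : QRep s t e) (M : QRep s t d) :
    (∀ i : V, Matrix (Fin (d i)) (Fin (e i)) ℂ) →
      (∀ a : A, Matrix (Fin (d (t a))) (Fin (e (s a))) ℂ) :=
  fun f a => M a * f (s a) - f (t a) * N a

/-- `Ext¹_Q(N, M) = 0`, expressed as surjectivity of `Φ^M_N` (whose cokernel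
computes `Ext¹` via the standard resolution over the path algebra). -/
def ExtVanish (s t : A → V) {e d : V → ℕ} (N : QRep s t e) (M : QRep s t d) : Prop :=
  Function.Surjective (PhiFun s t N M)

/-- A representation is rigid if `Ext¹_Q(M, M) = 0`. -/
def Rigid (s t : A → V) {d : V → ℕ} (M : QRep s t d) : Prop :=
  ExtVanish s t M M

/-- The Euler form `⟨x,y⟩ = Σ_i x i * y i − Σ_a x (s a) * y (t a)` of the quiver. -/
def eulerForm [Fintype V] [Fintype A] (s t : A → V) (x y : V → ℤ) : ℤ :=
  (∑ i : V, x i * y i) - ∑ a : A, x (s a) * y (t a)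

/-- The quiver is Dynkin (disjoint union of simply-laced Dynkin diagrams), i.e. its
Tits form is positive definite. -/
def IsDynkin [Fintype V] [Fintype A] (s t : A → V) : Prop :=
  ∀ x : V → ℤ, x ≠ 0 → 0 < eulerForm s t x x

/-- Morphisms of representations `X → Y`, given by matrices `φ i` with
`Y_a φ_{s a} = φ_{t a} X_a`. -/
def RHom (s t : A → V) {dX dY : V → ℕ} (X : QRep s t dX) (Y : QRep s t dY) : Type :=
  {φ : ∀ i : V, Matrix (Fin (dY i)) (Fin (dX i)) ℂ //
    ∀ a : A, Y a * φ (s a) = φ (t a) * X a}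


/-!
By the implicit function theorem, the orbit of a rigid representation is open; surjectivity of
`Φ` is a Zariski-open condition along a line of pairs of representations, so on the line between
two rigid representations the rigid points form the complement of a finite set, which is
connected: two rigid representations of the same dimension vector are isomorphic.

If `Ext¹(M̃_e, M̃_{d-e}) = 0`, the implicit function theorem shows that every representation near
`M̃_e ⊕ M̃_{d-e}` leaves invariant the graph of some family of maps `ℂ^{e i} → ℂ^{d i - e i}`.
A generic point of the line from `M̃_d` to `M̃_e ⊕ M̃_{d-e}` is rigid, hence isomorphic to `M̃_d`.

Conversely, a subrepresentation `A ⊆ M̃_d` with quotient `C` gives `Ext¹(A, C) = 0`, a quotient of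
`Ext¹(M̃_d, M̃_d)`. A generic point of the line from `(A, C)` to `(M̃_e, M̃_{d-e})` keeps
`Ext¹ = 0` and, close to the end, is isomorphic to `(M̃_e, M̃_{d-e})`.
-/

open Filter Topology

theorem finite_setOf_not_surjective_add_smul {K E F : Type*} [Field K] [AddCommGroup E]
    [Module K E] [AddCommGroup F] [Module K F] [FiniteDimensional K F] {f : E →ₗ[K] F}
    (hf : Function.Surjective f) (g : E →ₗ[K] F) :
    {z : K | ¬ Function.Surjective (f + z • g)}.Finite := by
  obtain ⟨σ, hσ⟩ := f.exists_rightInverse_of_surjective (LinearMap.range_eq_top.2 hf)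
  -- `(f + z • g) ∘ σ = 1 + z • (g ∘ σ)` is invertible unless `-z⁻¹` is an eigenvalue of `g ∘ σ`
  refine ((Module.End.finite_hasEigenvalue (g ∘ₗ σ)).image fun μ => -μ⁻¹).subset fun z hz => ?_
  have hnot : ¬ Function.Injective ((f + z • g) ∘ₗ σ) := fun hinj => by
    have hsurj := LinearMap.injective_iff_surjective.1 hinj
    rw [LinearMap.coe_comp] at hsurj
    exact hz hsurj.of_comp
  obtain ⟨v, hv, hv0⟩ : ∃ v, ((f + z • g) ∘ₗ σ) v = 0 ∧ v ≠ 0 := by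
    simpa only [injective_iff_map_eq_zero, not_forall, Classical.not_imp, exists_prop] using hnot
  have hfσ : f (σ v) = v := LinearMap.congr_fun hσ v
  simp only [LinearMap.comp_apply, LinearMap.add_apply, LinearMap.smul_apply, hfσ] at hv
  have hz0 : z ≠ 0 := by
    rintro rfl
    exact hv0 (by simpa using hv)
  refine ⟨-z⁻¹, Module.End.hasEigenvalue_of_hasEigenvector ⟨?_, hv0⟩, by simp⟩
  rw [Module.End.mem_eigenspace_iff, LinearMap.comp_apply]
  apply smul_right_injective F hz0
  dsimp only
  rw [smul_smul, mul_neg, mul_inv_cancel₀ hz0, neg_smul, one_smul, eq_neg_iff_add_eq_zero,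
    add_comm, hv]

theorem LinearMap.exists_mul_toMatrix'_eq_one {K m n : Type*} [Field K] [Fintype m] [Fintype n]
    [DecidableEq m] [DecidableEq n] {f : (n → K) →ₗ[K] m → K} (hf : Function.Injective f) :
    ∃ l : Matrix n m K, l * LinearMap.toMatrix' f = 1 := by
  obtain ⟨g, hg⟩ := f.exists_leftInverse_of_injective (LinearMap.ker_eq_bot.2 hf)
  exact ⟨LinearMap.toMatrix' g, by rw [← LinearMap.toMatrix'_comp, hg, LinearMap.toMatrix'_id]⟩

theorem LinearMap.exists_toMatrix'_mul_eq_one {K m n : Type*} [Field K] [Fintype m] [Fintype n]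
    [DecidableEq m] [DecidableEq n] {f : (n → K) →ₗ[K] m → K} (hf : Function.Surjective f) :
    ∃ r : Matrix n m K, LinearMap.toMatrix' f * r = 1 := by
  obtain ⟨g, hg⟩ := f.exists_rightInverse_of_surjective (LinearMap.range_eq_top.2 hf)
  exact ⟨LinearMap.toMatrix' g, by rw [← LinearMap.toMatrix'_comp, hg, LinearMap.toMatrix'_id]⟩

theorem Filter.Eventually.exists_and_of_cofinite {X : Type*} [TopologicalSpace X] [T1Space X]
    {x : X} [(𝓝[≠] x).NeBot] {p q : X → Prop} (hp : ∀ᶠ y in 𝓝 x, p y)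
    (hq : ∀ᶠ y in cofinite, q y) : ∃ y, p y ∧ q y :=
  ((hp.filter_mono nhdsWithin_le_nhds).and (hq.filter_mono (nhdsNE_le_cofinite x))).exists

section Calculus

variable {𝕜 : Type*} [NontriviallyNormedField 𝕜]

theorem AffineMap.tendsto_lineMap_nhds_one {E : Type*} [NormedAddCommGroup E] [NormedSpace 𝕜 E]
    (p q : E) : Tendsto (AffineMap.lineMap p q) (𝓝 (1 : 𝕜)) (𝓝 q) :=
  AffineMap.lineMap_continuous.tendsto' 1 q (AffineMap.lineMap_apply_one p q)

variable {ι R : Type*} [Fintype ι] {F : ι → Type*} [∀ i, NormedAddCommGroup (F i)]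
  [∀ i, NormedSpace 𝕜 (F i)] [NormedAddCommGroup R] [NormedSpace 𝕜 R]

theorem hasStrictFDerivAt_fst_apply (i : ι) (p : (∀ i, F i) × R) :
    HasStrictFDerivAt (fun p : (∀ i, F i) × R => p.1 i)
      (ContinuousLinearMap.proj i ∘L ContinuousLinearMap.fst 𝕜 _ R) p :=
  HasStrictFDerivAt.comp (g := fun f : ∀ i, F i => f i) p (hasStrictFDerivAt_apply i p.1)
    hasStrictFDerivAt_fst

theorem hasStrictFDerivAt_snd_apply (i : ι) (p : R × ∀ i, F i) :
    HasStrictFDerivAt (fun p : R × (∀ i, F i) => p.2 i)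
      (ContinuousLinearMap.proj i ∘L ContinuousLinearMap.snd 𝕜 R _) p :=
  HasStrictFDerivAt.comp (g := fun f : ∀ i, F i => f i) p (hasStrictFDerivAt_apply i p.2)
    hasStrictFDerivAt_snd

theorem HasStrictFDerivAt.eventually_exists_map_eq_zero {P T : Type*} [NormedAddCommGroup P]
    [NormedSpace 𝕜 P] [NormedAddCommGroup T] [NormedSpace 𝕜 T] [CompleteSpace P]
    [CompleteSpace R] [CompleteSpace T] {F : P × R → T} {D : P × R →L[𝕜] T} {p₀ : P} {x₀ : R}
    (hF : HasStrictFDerivAt F D (p₀, x₀)) (hF₀ : F (p₀, x₀) = 0)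
    (hD : Function.Surjective fun v : P => D (v, 0)) {Q : P → Prop} (hQ : ∀ᶠ p in 𝓝 p₀, Q p) :
    ∀ᶠ x in 𝓝 x₀, ∃ p, Q p ∧ F (p, x) = 0 := by
  -- `(p, x) ↦ (F (p, x), x)` is a submersion at `(p₀, x₀)`, hence open there
  have hG : HasStrictFDerivAt (fun z : P × R => (F z, z.2))
      (D.prod (ContinuousLinearMap.snd 𝕜 P R)) (p₀, x₀) :=
    hF.prodMk (ContinuousLinearMap.snd 𝕜 P R).hasStrictFDerivAt
  have hrange : (D.prod (ContinuousLinearMap.snd 𝕜 P R)).range = ⊤ := by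
    refine LinearMap.range_eq_top.2 fun ⟨w, r⟩ => ?_
    obtain ⟨v, hv⟩ := hD (w - D (0, r))
    refine ⟨(v, r), Prod.ext ?_ rfl⟩
    have hsplit : D (v, r) = D (v, 0) + D (0, r) := by
      rw [← map_add, Prod.mk_add_mk, add_zero, zero_add]
    simp [hsplit, hv]
  have himage : (fun z : P × R => (F z, z.2)) '' ({p | Q p} ×ˢ Set.univ) ∈ 𝓝 ((0 : T), x₀) := by
    rw [← hF₀, ← hG.map_nhds_eq_of_surj hrange]
    exact image_mem_map (prod_mem_nhds hQ univ_mem)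
  filter_upwards [(continuous_const.prodMk continuous_id).continuousAt.preimage_mem_nhds himage]
    with x ⟨⟨p, x'⟩, ⟨hp, _⟩, hpx⟩
  obtain ⟨h0, rfl⟩ := Prod.mk.inj hpx
  exact ⟨p, hp, h0⟩

end Calculus

section Representations

variable (s t : A → V) {d e : V → ℕ}

def phiLinear (N : QRep s t e) (M : QRep s t d) :
    (∀ i, Matrix (Fin (d i)) (Fin (e i)) ℂ) →ₗ[ℂ]
      ∀ a, Matrix (Fin (d (t a))) (Fin (e (s a))) ℂ where
  toFun := PhiFun s t N M
  map_add' f g := by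
    ext1 a
    simp only [PhiFun, Pi.add_apply, Matrix.mul_add, Matrix.add_mul]
    abel
  map_smul' c f := by
    ext1 a
    simp [PhiFun, smul_sub]

theorem phiLinear_add_smul (N N' : QRep s t e) (M M' : QRep s t d) (z : ℂ) :
    phiLinear s t (N + z • N') (M + z • M') = phiLinear s t N M + z • phiLinear s t N' M' := by
  ext1 f
  ext1 a
  simp only [phiLinear, PhiFun, LinearMap.coe_mk, AddHom.coe_mk, LinearMap.add_apply,
    LinearMap.smul_apply, Pi.add_apply, Pi.smul_apply, Matrix.add_mul, Matrix.mul_add,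
    Matrix.smul_mul, Matrix.mul_smul]
  module

theorem ExtVanish.eventually_cofinite_lineMap [Fintype A] {N : QRep s t e} {M : QRep s t d}
    (h : ExtVanish s t N M) (N' : QRep s t e) (M' : QRep s t d) :
    ∀ᶠ z : ℂ in cofinite, ExtVanish s t (AffineMap.lineMap N N' z) (AffineMap.lineMap M M' z) := by
  refine eventually_cofinite.2 ((finite_setOf_not_surjective_add_smul (f := phiLinear s t N M) h
    (phiLinear s t (N' - N) (M' - M))).subset fun z hz hsurj => hz ?_)
  rw [← phiLinear_add_smul] at hsurj
  rwa [AffineMap.lineMap_apply_module', AffineMap.lineMap_apply_module', add_comm (z • _),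
    add_comm (z • _)]

variable {s t}

def RHom.comp {dX dY dZ : V → ℕ} {X : QRep s t dX} {Y : QRep s t dY} {Z : QRep s t dZ}
    (ψ : RHom s t Y Z) (φ : RHom s t X Y) : RHom s t X Z :=
  ⟨fun i => ψ.1 i * φ.1 i, fun a => by
    rw [← Matrix.mul_assoc, ψ.2 a, Matrix.mul_assoc, φ.2 a, Matrix.mul_assoc]⟩

def RHom.ofLinearMap {dX dY : V → ℕ} {X : QRep s t dX} {Y : QRep s t dY}
    (φ : ∀ i, (Fin (dX i) → ℂ) →ₗ[ℂ] Fin (dY i) → ℂ)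
    (h : ∀ a, Matrix.toLin' (Y a) ∘ₗ φ (s a) = φ (t a) ∘ₗ Matrix.toLin' (X a)) :
    RHom s t X Y :=
  ⟨fun i => LinearMap.toMatrix' (φ i), fun a => by
    rw [← LinearMap.toMatrix'_toLin' (Y a), ← LinearMap.toMatrix'_toLin' (X a),
      ← LinearMap.toMatrix'_comp, ← LinearMap.toMatrix'_comp, h a]⟩

def RHom.IsMono {dX dY : V → ℕ} {X : QRep s t dX} {Y : QRep s t dY} (φ : RHom s t X Y) :
    Prop :=
  ∀ i, ∃ l : Matrix (Fin (dX i)) (Fin (dY i)) ℂ, l * φ.1 i = 1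

def RHom.IsEpi {dX dY : V → ℕ} {X : QRep s t dX} {Y : QRep s t dY} (φ : RHom s t X Y) :
    Prop :=
  ∀ i, ∃ r : Matrix (Fin (dX i)) (Fin (dY i)) ℂ, φ.1 i * r = 1

variable (s t) in
def IsoRep (X X' : QRep s t d) : Prop :=
  ∃ g : RHom s t X X', ∀ i, IsUnit (g.1 i)

theorem IsoRep.trans {X X' X'' : QRep s t d} (h : IsoRep s t X X') (h' : IsoRep s t X' X'') :
    IsoRep s t X X'' :=
  let ⟨g, hg⟩ := h
  let ⟨g', hg'⟩ := h'
  ⟨g'.comp g, fun i => (hg' i).mul (hg i)⟩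

theorem IsoRep.symm {X X' : QRep s t d} (h : IsoRep s t X X') : IsoRep s t X' X := by
  obtain ⟨g, hg⟩ := h
  let u i := ((hg i).unit⁻¹).val
  refine ⟨⟨u, fun a => ?_⟩, fun i => ((hg i).unit⁻¹).isUnit⟩
  calc X a * u (s a) = u (t a) * (g.1 (t a) * X a) * u (s a) := by
        rw [← Matrix.mul_assoc, (hg _).val_inv_mul, Matrix.one_mul]
    _ = u (t a) * X' a := by
        rw [← g.2 a, Matrix.mul_assoc, Matrix.mul_assoc, (hg _).mul_val_inv, Matrix.mul_one]

theorem ExtVanish.of_isMono_of_isEpi {dB dX dY dC : V → ℕ} {B : QRep s t dB} {X : QRep s t dX}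
    {Y : QRep s t dY} {C : QRep s t dC} (h : ExtVanish s t X Y) {ι : RHom s t B X}
    (hι : ι.IsMono) {π : RHom s t Y C} (hπ : π.IsEpi) : ExtVanish s t B C := by
  choose l hl using hι
  choose r hr using hπ
  intro y
  obtain ⟨f, hf⟩ := h fun a => r (t a) * y a * l (s a)
  refine ⟨fun i => π.1 i * f i * ι.1 i, funext fun a => ?_⟩
  calc C a * (π.1 (s a) * f (s a) * ι.1 (s a)) - π.1 (t a) * f (t a) * ι.1 (t a) * B a
      = π.1 (t a) * PhiFun s t X Y f a * ι.1 (s a) := by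
        simp only [PhiFun, Matrix.mul_sub, Matrix.sub_mul, ← Matrix.mul_assoc, π.2 a]
        simp only [Matrix.mul_assoc, ι.2 a]
    _ = y a := by
        rw [hf]
        simp only [← Matrix.mul_assoc, hr, Matrix.one_mul]
        simp only [Matrix.mul_assoc, hl, Matrix.mul_one]

theorem ExtVanish.of_isoRep {N N' : QRep s t e} {M M' : QRep s t d} (h : ExtVanish s t N M)
    (hN : IsoRep s t N N') (hM : IsoRep s t M M') : ExtVanish s t N' M' := by
  obtain ⟨g, hg⟩ := hN.symm
  obtain ⟨g', hg'⟩ := hM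
  exact h.of_isMono_of_isEpi (ι := g) (fun i => (hg i).exists_left_inv) (π := g')
    fun i => (hg' i).exists_right_inv

theorem RHom.IsMono.nonempty_subRep {B : QRep s t e} {X : QRep s t d} {ι : RHom s t B X}
    (hι : ι.IsMono) : Nonempty (SubRep s t X e) := by
  refine ⟨⟨fun i => LinearMap.range (ι.1 i).mulVecLin, fun i => ?_, fun a => ?_⟩⟩
  · obtain ⟨l, hl⟩ := hι i
    refine (LinearMap.finrank_range_of_inj fun v w hvw => ?_).trans (Module.finrank_fin_fun ℂ)
    simpa [Matrix.mulVec_mulVec, hl] using congrArg l.mulVec hvw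
  · rw [← LinearMap.range_comp, ← Matrix.mulVecLin_mul, ι.2 a, Matrix.mulVecLin_mul]
    exact LinearMap.range_comp_le_range _ _

theorem SubRep.exists_isMono {X : QRep s t d} (N : SubRep s t X e) :
    ∃ (B : QRep s t e) (ι : RHom s t B X), ι.IsMono := by
  obtain ⟨N, hrk, hinv⟩ := N
  let b i := (Module.finBasisOfFinrankEq ℂ (N i) (hrk i)).equivFun
  have hmaps a : ∀ x ∈ N (s a), Matrix.toLin' (X a) x ∈ N (t a) := fun x hx => hinv a ⟨x, hx, rfl⟩
  let ιL i := (N i).subtype ∘ₗ (b i).symm.toLinearMap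
  let BL a := (b (t a)).toLinearMap ∘ₗ (Matrix.toLin' (X a)).restrict (hmaps a) ∘ₗ
    (b (s a)).symm.toLinearMap
  refine ⟨fun a => LinearMap.toMatrix' (BL a), RHom.ofLinearMap ιL fun a => ?_, fun i => ?_⟩
  · refine LinearMap.ext fun v => ?_
    simp [ιL, BL]
  · exact LinearMap.exists_mul_toMatrix'_eq_one ((N i).injective_subtype.comp (b i).symm.injective)

theorem SubRep.exists_isEpi {X : QRep s t d} (N : SubRep s t X e) :
    ∃ (C : QRep s t fun i => d i - e i) (π : RHom s t X C), π.IsEpi := by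
  obtain ⟨N, hrk, hinv⟩ := N
  have hdim i : Module.finrank ℂ ((Fin (d i) → ℂ) ⧸ N i) = d i - e i := by
    rw [Submodule.finrank_quotient, Module.finrank_fin_fun, hrk i]
  let w i := (Module.finBasisOfFinrankEq ℂ _ (hdim i)).equivFun
  have hmaps a : N (s a) ≤ (N (t a)).comap (Matrix.toLin' (X a)) := fun x hx => hinv a ⟨x, hx, rfl⟩
  let πL i := (w i).toLinearMap ∘ₗ (N i).mkQ
  let CL a := (w (t a)).toLinearMap ∘ₗ (N (s a)).mapQ (N (t a)) (Matrix.toLin' (X a)) (hmaps a) ∘ₗ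
    (w (s a)).symm.toLinearMap
  refine ⟨fun a => LinearMap.toMatrix' (CL a), RHom.ofLinearMap πL fun a => ?_, fun i => ?_⟩
  · refine LinearMap.ext fun v => ?_
    simp [πL, CL]
  · exact LinearMap.exists_toMatrix'_mul_eq_one ((w i).surjective.comp (N i).mkQ_surjective)

theorem IsoRep.nonempty_subRep {X X' : QRep s t d} (h : IsoRep s t X X')
    (hX : Nonempty (SubRep s t X e)) : Nonempty (SubRep s t X' e) := by
  obtain ⟨g, hg⟩ := h
  obtain ⟨B, ι, hι⟩ := hX.some.exists_isMono
  refine RHom.IsMono.nonempty_subRep (ι := g.comp ι) fun i => ?_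
  obtain ⟨l, hl⟩ := hι i
  obtain ⟨u, hu⟩ := (hg i).exists_left_inv
  refine ⟨l * u, ?_⟩
  simp only [RHom.comp, Matrix.mul_assoc, ← Matrix.mul_assoc u, hu, Matrix.one_mul, hl]

end Representations

structure Matrix.Splitting (R : Type*) [Semiring R] (n l m : Type*) [Fintype n] [Fintype l]
    [Fintype m] [DecidableEq n] [DecidableEq l] [DecidableEq m] where
  I₁ : Matrix n l R
  I₂ : Matrix n m R
  Q₁ : Matrix l n R
  Q₂ : Matrix m n R
  Q₁_mul_I₁ : Q₁ * I₁ = 1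
  Q₂_mul_I₂ : Q₂ * I₂ = 1
  Q₁_mul_I₂ : Q₁ * I₂ = 0
  Q₂_mul_I₁ : Q₂ * I₁ = 0
  I₁_mul_Q₁_add_I₂_mul_Q₂ : I₁ * Q₁ + I₂ * Q₂ = 1

namespace Matrix.Splitting

variable {R n l m : Type*} [Fintype n] [Fintype l] [Fintype m] [DecidableEq n] [DecidableEq l]
  [DecidableEq m]

def ofEquiv [Semiring R] (σ : l ⊕ m ≃ n) : Splitting R n l m where
  I₁ := (1 : Matrix n n R).submatrix id (σ ∘ Sum.inl)
  I₂ := (1 : Matrix n n R).submatrix id (σ ∘ Sum.inr)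
  Q₁ := (1 : Matrix n n R).submatrix (σ ∘ Sum.inl) id
  Q₂ := (1 : Matrix n n R).submatrix (σ ∘ Sum.inr) id
  Q₁_mul_I₁ := by ext i j; simp [Matrix.mul_apply, Matrix.one_apply]
  Q₂_mul_I₂ := by ext i j; simp [Matrix.mul_apply, Matrix.one_apply]
  Q₁_mul_I₂ := by ext i j; simp [Matrix.mul_apply, Matrix.one_apply]
  Q₂_mul_I₁ := by ext i j; simp [Matrix.mul_apply, Matrix.one_apply]
  I₁_mul_Q₁_add_I₂_mul_Q₂ := by
    have hcols : fromCols ((1 : Matrix n n R).submatrix id (σ ∘ Sum.inl))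
        ((1 : Matrix n n R).submatrix id (σ ∘ Sum.inr)) = (1 : Matrix n n R).submatrix id σ := by
      ext i (j | j) <;> rfl
    have hrows : fromRows ((1 : Matrix n n R).submatrix (σ ∘ Sum.inl) id)
        ((1 : Matrix n n R).submatrix (σ ∘ Sum.inr) id) = (1 : Matrix n n R).submatrix σ id := by
      ext (i | i) j <;> rfl
    rw [← fromCols_mul_fromRows, hcols, hrows, submatrix_mul_equiv, Matrix.one_mul,
      submatrix_id_id]

variable [Ring R] (S : Splitting R n l m)

theorem Q₁_mul_add_I₂_mul (h : Matrix m l R) : S.Q₁ * (S.I₁ + S.I₂ * h) = 1 := by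
  rw [Matrix.mul_add, S.Q₁_mul_I₁, ← Matrix.mul_assoc, S.Q₁_mul_I₂, Matrix.zero_mul, add_zero]

/-- `(h * Q₁ - Q₂) * W = 0` says that the columns of `W` lie in the graph of `h`. -/
theorem eq_add_I₂_mul_mul_of_mul_eq_zero {k : Type*} (h : Matrix m l R) (W : Matrix n k R)
    (hW : (h * S.Q₁ - S.Q₂) * W = 0) : W = (S.I₁ + S.I₂ * h) * (S.Q₁ * W) := by
  have hgraph : h * (S.Q₁ * W) = S.Q₂ * W := by
    rw [← Matrix.mul_assoc, ← sub_eq_zero, ← Matrix.sub_mul, hW]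
  rw [Matrix.add_mul, Matrix.mul_assoc, hgraph, ← Matrix.mul_assoc, ← Matrix.mul_assoc,
    ← Matrix.add_mul, S.I₁_mul_Q₁_add_I₂_mul_Q₂, Matrix.one_mul]

end Matrix.Splitting

section DirectSum

variable (s t : A → V) {d e c : V → ℕ}
  (S : ∀ i, Matrix.Splitting ℂ (Fin (d i)) (Fin (e i)) (Fin (c i)))

def directSumRep (B : QRep s t e) (C : QRep s t c) : QRep s t d :=
  fun a => (S (t a)).I₁ * B a * (S (s a)).Q₁ + (S (t a)).I₂ * C a * (S (s a)).Q₂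

variable {s t} (B : QRep s t e) (C : QRep s t c) (a : A)

theorem directSumRep_mul_I₁ : directSumRep s t S B C a * (S (s a)).I₁ = (S (t a)).I₁ * B a := by
  simp [directSumRep, Matrix.add_mul, Matrix.mul_assoc, Matrix.Splitting.Q₁_mul_I₁,
    Matrix.Splitting.Q₂_mul_I₁]

theorem Q₂_mul_directSumRep : (S (t a)).Q₂ * directSumRep s t S B C a = C a * (S (s a)).Q₂ := by
  simp [directSumRep, Matrix.mul_add, ← Matrix.mul_assoc, Matrix.Splitting.Q₂_mul_I₂,
    Matrix.Splitting.Q₂_mul_I₁]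

end DirectSum

section MatrixAnalysis

variable {𝕜 : Type*}

-- the entrywise sup norm, built on `m → n → 𝕜` rather than as `Matrix.normedAddCommGroup` so that
-- the algebraic operations stay reducibly those of `Matrix` and matrix `simp` lemmas apply
local instance [NormedField 𝕜] {m n : Type*} [Fintype m] [Fintype n] :
    NormedAddCommGroup (Matrix m n 𝕜) :=
  inferInstanceAs (NormedAddCommGroup (m → n → 𝕜))

local instance [NormedField 𝕜] {m n : Type*} [Fintype m] [Fintype n] :
    NormedSpace 𝕜 (Matrix m n 𝕜) :=
  inferInstanceAs (NormedSpace 𝕜 (m → n → 𝕜))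

theorem HasStrictFDerivAt.matrix_mul [NontriviallyNormedField 𝕜] [CompleteSpace 𝕜] {G : Type*}
    [NormedAddCommGroup G] [NormedSpace 𝕜 G] {l m n : Type*} [Fintype l] [Fintype m] [Fintype n]
    {f : G → Matrix l m 𝕜} {g : G → Matrix m n 𝕜} {f' : G →L[𝕜] Matrix l m 𝕜}
    {g' : G →L[𝕜] Matrix m n 𝕜} {x : G} (hf : HasStrictFDerivAt f f' x)
    (hg : HasStrictFDerivAt g g' x) :
    HasStrictFDerivAt (fun y => f y * g y)
      ((mulLeftLinearMap n 𝕜 (f x)).toContinuousLinearMap ∘L g' +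
        (mulRightLinearMap l 𝕜 (g x)).toContinuousLinearMap ∘L f') x :=
  ((mulLinearMap 𝕜 : Matrix l m 𝕜 →ₗ[𝕜] Matrix m n 𝕜 →ₗ[𝕜] Matrix l n 𝕜
    ).toContinuousBilinearMap.hasStrictFDerivAt_of_bilinear hf hg).congr_fderiv (by ext; rfl)

variable (s t : A → V) [Fintype V] [Fintype A] {d e : V → ℕ}

theorem Rigid.eventually_isoRep {M : QRep s t d} (hM : Rigid s t M) :
    ∀ᶠ X in 𝓝 M, IsoRep s t X M := by
  -- `(g, X) ↦ Φ^M_X g` vanishes at `(1, M)` and its derivative in `g` there is `Φ^M_M`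
  have hF : HasStrictFDerivAt
      (fun p : (∀ i, Matrix (Fin (d i)) (Fin (d i)) ℂ) × QRep s t d => PhiFun s t p.2 M p.1) _
      (1, M) :=
    hasStrictFDerivAt_pi.2 fun a => ((hasStrictFDerivAt_const (M a) _).matrix_mul
      (hasStrictFDerivAt_fst_apply (s a) _)).sub
        ((hasStrictFDerivAt_fst_apply (t a) _).matrix_mul (hasStrictFDerivAt_snd_apply a _))
  have hunit : ∀ᶠ g in 𝓝 (1 : ∀ i, Matrix (Fin (d i)) (Fin (d i)) ℂ), ∀ i, IsUnit (g i) := by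
    refine eventually_all.2 fun i => ?_
    filter_upwards [(continuous_apply i).matrix_det.continuousAt.eventually_ne
      (show ((1 : ∀ i, Matrix (Fin (d i)) (Fin (d i)) ℂ) i).det ≠ 0 by simp)] with g hg
    exact (Matrix.isUnit_iff_isUnit_det _).2 (isUnit_iff_ne_zero.2 hg)
  refine (hF.eventually_exists_map_eq_zero (by ext1 a; simp [PhiFun]) (fun w => ?_) hunit).mono
    fun X ⟨g, hg, hgX⟩ => ⟨⟨g, fun a => sub_eq_zero.1 (congrFun hgX a)⟩, hg⟩
  obtain ⟨v, hv⟩ := hM w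
  refine ⟨v, ?_⟩
  rw [← hv]
  ext1 a
  simp [PhiFun]

theorem Rigid.isoRep {M M' : QRep s t d} (hM : Rigid s t M) (hM' : Rigid s t M') :
    IsoRep s t M M' := by
  let ℓ : ℂ → QRep s t d := AffineMap.lineMap M M'
  have hS : IsPreconnected {z | Rigid s t (ℓ z)} := by
    have hfin := eventually_cofinite.1 (hM.eventually_cofinite_lineMap s t M' M')
    simpa [ℓ, Rigid, Set.compl_ofPred] using
      (hfin.countable.isConnected_compl_of_one_lt_rank (by simp)).isPreconnected
  have h01 := hS.induction₂' (fun z w => IsoRep s t (ℓ z) (ℓ w))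
    (fun z hz => ((AffineMap.lineMap_continuous.tendsto z).eventually hz.eventually_isoRep)
      |>.filter_mono nhdsWithin_le_nhds |>.mono fun w hw => ⟨hw.symm, hw⟩)
    (fun _ _ _ _ _ _ => IsoRep.trans) (x := 0) (y := 1) (by simpa [ℓ] using hM)
    (by simpa [ℓ] using hM')
  simpa [ℓ] using h01

theorem ExtVanish.eventually_nonempty_subRep_nhds_directSumRep {c : V → ℕ}
    (S : ∀ i, Matrix.Splitting ℂ (Fin (d i)) (Fin (e i)) (Fin (c i))) {B : QRep s t e}
    {C : QRep s t c} (h : ExtVanish s t B C) :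
    ∀ᶠ X in 𝓝 (directSumRep s t S B C), Nonempty (SubRep s t X e) := by
  set Y := directSumRep s t S B C
  -- `X` leaves the graph of `k` invariant iff this map vanishes at `(k, X)`; its derivative in `k`
  -- at `(0, Y)` is `-Φ^C_B`
  have hF : HasStrictFDerivAt
      (fun p : (∀ i, Matrix (Fin (c i)) (Fin (e i)) ℂ) × QRep s t d => fun a =>
        (p.1 (t a) * (S (t a)).Q₁ - (S (t a)).Q₂) * p.2 a *
          ((S (s a)).I₁ + (S (s a)).I₂ * p.1 (s a))) _ (0, Y) :=
    hasStrictFDerivAt_pi.2 fun a =>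
      ((((hasStrictFDerivAt_fst_apply (t a) _).matrix_mul
        (hasStrictFDerivAt_const _ _)).sub_const _).matrix_mul
          (hasStrictFDerivAt_snd_apply a _)).matrix_mul
        (((hasStrictFDerivAt_const _ _).matrix_mul
          (hasStrictFDerivAt_fst_apply (s a) _)).const_add _)
  refine (hF.eventually_exists_map_eq_zero ?_ (fun w => ?_)
    (Eventually.of_forall (p := fun _ => True) fun _ => trivial)).mono fun X ⟨k, _, hk⟩ => ?_
  · ext1 a
    simp only [Y, Pi.zero_apply, Matrix.zero_mul, zero_sub, Matrix.neg_mul, Matrix.mul_zero,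
      add_zero, Matrix.mul_assoc, directSumRep_mul_I₁, neg_eq_zero]
    rw [← Matrix.mul_assoc, (S (t a)).Q₂_mul_I₁, Matrix.zero_mul]
  · obtain ⟨v, hv⟩ := h (-w)
    refine ⟨v, funext fun a => ?_⟩
    have hC : (S (t a)).Q₂ * Y a * ((S (s a)).I₂ * v (s a)) = C a * v (s a) := by
      rw [Q₂_mul_directSumRep, Matrix.mul_assoc, ← Matrix.mul_assoc (S (s a)).Q₂,
        (S (s a)).Q₂_mul_I₂, Matrix.one_mul]
    have hB : v (t a) * (S (t a)).Q₁ * Y a * (S (s a)).I₁ = v (t a) * B a := by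
      rw [Matrix.mul_assoc, directSumRep_mul_I₁, ← Matrix.mul_assoc, Matrix.mul_assoc (v (t a)),
        (S (t a)).Q₁_mul_I₁, Matrix.mul_one]
    have hva : C a * v (s a) - v (t a) * B a = -w a := congrFun hv a
    simpa [hC, hB, neg_add_eq_sub] using congrArg Neg.neg hva
  · refine RHom.IsMono.nonempty_subRep
      (B := fun a => (S (t a)).Q₁ * (X a * ((S (s a)).I₁ + (S (s a)).I₂ * k (s a))))
      (ι := ⟨fun i => (S i).I₁ + (S i).I₂ * k i, fun a =>
        (S (t a)).eq_add_I₂_mul_mul_of_mul_eq_zero _ _ ?_⟩)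
      fun i => ⟨_, (S i).Q₁_mul_add_I₂_mul (k i)⟩
    rw [← Matrix.mul_assoc]
    exact congrFun hk a

theorem Rigid.nonempty_subRep_of_extVanish (hle : ∀ i, e i ≤ d i) {M : QRep s t d}
    (hM : Rigid s t M) {B : QRep s t e} {C : QRep s t fun i => d i - e i}
    (h : ExtVanish s t B C) : Nonempty (SubRep s t M e) := by
  let S i : Matrix.Splitting ℂ (Fin (d i)) (Fin (e i)) (Fin (d i - e i)) :=
    .ofEquiv (finSumFinEquiv.trans (finCongr (Nat.add_sub_cancel' (hle i))))
  let Y := directSumRep s t S B C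
  obtain ⟨z, hsub, hrigid⟩ := Eventually.exists_and_of_cofinite
    ((AffineMap.tendsto_lineMap_nhds_one M Y).eventually
      (h.eventually_nonempty_subRep_nhds_directSumRep s t S))
    (hM.eventually_cofinite_lineMap s t Y Y)
  exact (Rigid.isoRep s t hrigid hM).nonempty_subRep hsub

theorem Rigid.extVanish_of_nonempty_subRep {M : QRep s t d} (hM : Rigid s t M) {B : QRep s t e}
    {C : QRep s t fun i => d i - e i} (hB : Rigid s t B) (hC : Rigid s t C)
    (hN : Nonempty (SubRep s t M e)) : ExtVanish s t B C := by
  obtain ⟨B₀, ι, hι⟩ := hN.some.exists_isMono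
  obtain ⟨C₀, π, hπ⟩ := hN.some.exists_isEpi
  obtain ⟨z, ⟨hzB, hzC⟩, hz⟩ := Eventually.exists_and_of_cofinite
    (((AffineMap.tendsto_lineMap_nhds_one B₀ B).eventually hB.eventually_isoRep).and
      ((AffineMap.tendsto_lineMap_nhds_one C₀ C).eventually hC.eventually_isoRep))
    ((hM.of_isMono_of_isEpi hι hπ).eventually_cofinite_lineMap s t B C)
  exact hz.of_isoRep hzB hzC

end MatrixAnalysis

theorem subRep_rigid_nonempty_iff_general [Fintype V] [Fintype A] (s t : A → V)
    (d e : V → ℕ) (hle : ∀ i, e i ≤ d i)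
    (Md : QRep s t d) (Me : QRep s t e) (Mde : QRep s t (fun i => d i - e i))
    (hMd : Rigid s t Md) (hMe : Rigid s t Me) (hMde : Rigid s t Mde) :
    Nonempty (SubRep s t Md e) ↔ ExtVanish s t Me Mde :=
  ⟨hMd.extVanish_of_nonempty_subRep s t hMe hMde, hMd.nonempty_subRep_of_extVanish s t hle⟩

/-- `Gr_e(M̃_d) ≠ ∅ ↔ Ext¹(M̃_e, M̃_{d−e}) = 0`. -/
theorem subRep_rigid_nonempty_iff [Fintype V] [Fintype A] (s t : A → V)
    (hQ : IsDynkin s t) (d e : V → ℕ) (hle : ∀ i, e i ≤ d i)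
    (Md : QRep s t d) (Me : QRep s t e) (Mde : QRep s t (fun i => d i - e i))
    (hMd : Rigid s t Md) (hMe : Rigid s t Me) (hMde : Rigid s t Mde) :
    Nonempty (SubRep s t Md e) ↔ ExtVanish s t Me Mde :=
  subRep_rigid_nonempty_iff_general s t d e hle Md Me Mde hMd hMe hMde

end
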